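/- arXiv:2001.04001 — 2 statements merged into one kernel-verified Lean document; each statement's English description precedes it below -/
import Mathlib

section
/- Let $N_h, N_s, n \in \mathbb{N}$ with $1 \le n \le \min(N_h, N_s)$. Let $X_h \in \mathbb{R}^{N_h \times N_h}$ be symmetric positive definite with Cholesky-type factorization $X_h = H^T H$ for an invertible matrix $H \in \mathbb{R}^{N_h \times N_h}$. Let $S \in \mathbb{R}^{N_h \times N_s}$ be a snapshot matrix with columns $\mathbf{s}_1, \dots, \mathbf{s}_{N_s}$, and let $HS = U \Sigma Z^T$ be a singular value decomposition, where $U \in \mathbb{R}^{N_h \times N_h}$ and $Z \in \mathbb{R}^{N_s \times N_s}$ are orthogonal and $\Sigma$ is diagonal with nonnegative entries $\sigma_1 \ge \sigma_2 \ge \dots$. Define $V \in \mathbb{R}^{N_h \times n}$ by $V = [H^{-1}\boldsymbol{\zeta}_1 \,|\, \dots \,|\, H^{-1}\boldsymbol{\zeta}_n]$, where $\boldsymbol{\zeta}_1, \dots, \boldsymbol{\zeta}_n$ are the first $n$ columns of $U$. Then $V$ achieves the minimum of the reconstruction error over all $X_h$-orthonormal bases of dimension $n$, namely: $\sum_{k=1}^{N_s}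 \|\mathbf{s}_k - V V^T X_h \mathbf{s}_k\|_{X_h}^2 = \min_{W \in \mathcal{V}_n} \sum_{k=1}^{N_s} \|\mathbf{s}_k - W W^T X_h \mathbf{s}_k\|_{X_h}^2$, where $\mathcal{V}_n = \{ W \in \mathbb{R}^{N_h \times n} : W^T X_h W = I_n \}$ and $\|\mathbf{v}\|_{X_h}^2 = \mathbf{v}^T X_h \mathbf{v}$. -/
open Matrix BigOperators

section PODaux
set_option linter.unusedSectionVars false
variable {m p q : Type*} [Fintype m] [Fintype p] [Fintype q] [DecidableEq m] [DecidableEq q]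

lemma pod_sum_col_dot (X : Matrix m m ℝ) (M : Matrix m p ℝ) :
    ∑ k : p, (fun i => M i k) ⬝ᵥ (X *ᵥ (fun i => M i k)) = trace (Mᵀ * X * M) := by
  simp only [trace, diag_apply, mul_apply, mulVec, dotProduct, transpose_apply]
  refine Finset.sum_congr rfl fun k _ => ?_
  simp only [Finset.sum_mul]
  rw [Finset.sum_comm]
  refine Finset.sum_congr rfl fun i _ => ?_
  rw [Finset.mul_sum]
  refine Finset.sum_congr rfl fun j _ => ?_
  ring

lemma pod_frob (B : Matrix m p ℝ) : trace (Bᵀ * B) = ∑ j : p, ∑ i : m, (B i j)^2 := by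
  simp [trace, diag, mul_apply, sq]

lemma pod_err_eq (Y : Matrix m p ℝ) (T : Matrix m q ℝ) (hT : Tᵀ * T = 1) :
    trace ((Y - T * Tᵀ * Y)ᵀ * (Y - T * Tᵀ * Y))
      = trace (Yᵀ * Y) - trace ((Tᵀ * Y)ᵀ * (Tᵀ * Y)) := by
  have h : (Y - T * Tᵀ * Y)ᵀ * (Y - T * Tᵀ * Y) = Yᵀ * Y - (Tᵀ*Y)ᵀ * (Tᵀ*Y) := by
    have e1 : (Y - T * Tᵀ * Y)ᵀ = Yᵀ - Yᵀ * T * Tᵀ := by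
      simp [transpose_sub, transpose_mul, Matrix.mul_assoc]
    rw [e1, Matrix.sub_mul, Matrix.mul_sub, Matrix.mul_sub]
    have e2 : Yᵀ * T * Tᵀ * (T * Tᵀ * Y) = Yᵀ * T * Tᵀ * Y := by
      calc Yᵀ * T * Tᵀ * (T * Tᵀ * Y) = Yᵀ * T * (Tᵀ * T) * (Tᵀ * Y) := by
            simp only [Matrix.mul_assoc]
        _ = Yᵀ * T * Tᵀ * Y := by rw [hT]; simp [Matrix.mul_assoc]
    rw [e2]
    have e3 : (Tᵀ*Y)ᵀ * (Tᵀ*Y) = Yᵀ * T * (Tᵀ * Y) := by simp [transpose_mul, Matrix.mul_assoc]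
    rw [e3]
    abel_nf
    simp [Matrix.mul_assoc]
  rw [h, trace_sub]

lemma pod_trace_ZT (A : Matrix p q ℝ) (Z : Matrix q q ℝ) (hZ : Zᵀ * Z = 1) :
    trace ((A * Zᵀ)ᵀ * (A * Zᵀ)) = trace (Aᵀ * A) := by
  have : (A * Zᵀ)ᵀ * (A * Zᵀ) = Z * (Aᵀ * A * Zᵀ) := by
    simp [transpose_mul, Matrix.mul_assoc]
  rw [this, trace_mul_comm, Matrix.mul_assoc, hZ, Matrix.mul_one]

lemma pod_row_sq_le_one (Q : Matrix m q ℝ) (hQ : Qᵀ * Q = 1) (i : m) :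
    0 ≤ ∑ k, (Q i k)^2 ∧ ∑ k, (Q i k)^2 ≤ 1 := by
  set P := Q * Qᵀ with hP
  have hPsymm : ∀ a b, P a b = P b a := by
    intro a b; simp [hP, mul_apply, mul_comm]
  have hdiag : P i i = ∑ k, (Q i k)^2 := by simp [hP, mul_apply, sq]
  have hproj : P * P = P := by
    rw [hP, Matrix.mul_assoc, ← Matrix.mul_assoc Qᵀ, hQ, Matrix.one_mul]
  have hsq : P i i = ∑ j, (P i j)^2 := by
    conv_lhs => rw [← hproj]
    simp [mul_apply, sq]
    exact Finset.sum_congr rfl fun j _ => by rw [hPsymm j i]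
  have h0 : 0 ≤ P i i := hsq ▸ Finset.sum_nonneg fun j _ => sq_nonneg _
  have h1 : (P i i)^2 ≤ P i i := by
    have h := Finset.single_le_sum (f := fun j => (P i j)^2) (fun j _ => sq_nonneg (P i j))
      (Finset.mem_univ i)
    linarith [hsq]
  constructor
  · rw [← hdiag]; exact h0
  · rw [← hdiag]; nlinarith

lemma pod_sum_row_sq (Q : Matrix m q ℝ) (hQ : Qᵀ * Q = 1) :
    ∑ i, ∑ k, (Q i k)^2 = (Fintype.card q : ℝ) := by
  have : ∑ i : m, ∑ k : q, (Q i k)^2 = trace (Qᵀ * Q) := by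
    rw [Finset.sum_comm]
    simp [trace, diag, mul_apply, sq]
  rw [this, hQ, trace_one]

lemma pod_abel_bound (c r : m → ℝ) (c' : ℝ)
    (ind : m → ℝ) (hind : ∀ i, ind i = 0 ∨ ind i = 1)
    (hr0 : ∀ i, 0 ≤ r i) (hr1 : ∀ i, r i ≤ 1)
    (hsum : ∑ i, r i = ∑ i, ind i)
    (hlo : ∀ i, ind i = 1 → c' ≤ c i) (hhi : ∀ i, ind i = 0 → c i ≤ c') :
    ∑ i, c i * r i ≤ ∑ i, c i * ind i := by
  have key : ∑ i, (c i * r i - c i * ind i) ≤ ∑ i, c' * (r i - ind i) := by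
    refine Finset.sum_le_sum fun i _ => ?_
    rcases hind i with h | h
    · rw [h]; have := hhi i h; have := hr0 i; nlinarith
    · rw [h]; have := hlo i h; have := hr1 i; nlinarith
  have h2 : ∑ i, c' * (r i - ind i) = 0 := by
    rw [← Finset.mul_sum, Finset.sum_sub_distrib, hsum, sub_self, mul_zero]
  rw [Finset.sum_sub_distrib] at key
  rw [h2] at key
  linarith

lemma pod_sum_range_eq_of (g : ℕ → ℝ) (a b : ℕ) (h : ∀ t, min a b ≤ t → g t = 0) :
    ∑ t ∈ Finset.range a, g t = ∑ t ∈ Finset.range b, g t := by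
  have ha : ∑ t ∈ Finset.range (min a b), g t = ∑ t ∈ Finset.range a, g t :=
    Finset.sum_subset (Finset.range_subset_range.2 (min_le_left a b))
      (fun t _ ht => h t (by simp [Finset.mem_range] at ht; omega))
  have hb : ∑ t ∈ Finset.range (min a b), g t = ∑ t ∈ Finset.range b, g t :=
    Finset.sum_subset (Finset.range_subset_range.2 (min_le_right a b))
      (fun t _ ht => h t (by simp [Finset.mem_range] at ht; omega))
  rw [← ha, hb]

lemma pod_collapse (Nh Ns : ℕ) {α : Type*} [Fintype α] (σ : ℕ → ℝ)
    (Sig : Matrix (Fin Nh) (Fin Ns) ℝ)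
    (hSig : ∀ (i : Fin Nh) (j : Fin Ns),
      Sig i j = if (i : ℕ) = (j : ℕ) then σ (i : ℕ) else 0)
    (Q : Matrix (Fin Nh) α ℝ) :
    ∑ j : Fin Ns, ∑ k : α, ((Qᵀ * Sig) k j)^2
      = ∑ i : Fin Nh, (if (i:ℕ) < Ns then σ (i:ℕ) ^ 2 else 0) * ∑ k, (Q i k)^2 := by
  have entry : ∀ (k : α) (j : Fin Ns),
      (Qᵀ * Sig) k j = if h : (j:ℕ) < Nh then Q ⟨(j:ℕ), h⟩ k * σ (j:ℕ) else 0 := by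
    intro k j
    rw [mul_apply]
    by_cases h : (j:ℕ) < Nh
    · rw [dif_pos h]
      rw [Finset.sum_eq_single ⟨(j:ℕ), h⟩]
      · simp [hSig]
      · intro i _ hi
        have : (i:ℕ) ≠ (j:ℕ) := fun he => hi (Fin.ext he)
        simp [hSig, this]
      · simp
    · rw [dif_neg h]
      apply Finset.sum_eq_zero
      intro i _
      have : (i:ℕ) ≠ (j:ℕ) := fun he => h (he ▸ i.2)
      simp [hSig, this, transpose_apply]
  set g : ℕ → ℝ := fun t => if h : t < Nh ∧ t < Ns then σ t ^ 2 * ∑ k, (Q ⟨t, h.1⟩ k)^2 else 0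
    with hg
  have hgz : ∀ t, min Nh Ns ≤ t → g t = 0 := by
    intro t ht
    rw [hg]
    have : ¬ (t < Nh ∧ t < Ns) := by
      rintro ⟨h1, h2⟩; exact absurd (lt_min h1 h2) (not_lt.2 ht)
    simp [this]
  have hL : ∑ j : Fin Ns, ∑ k : α, ((Qᵀ * Sig) k j)^2 = ∑ t ∈ Finset.range Ns, g t := by
    rw [← Fin.sum_univ_eq_sum_range]
    refine Finset.sum_congr rfl fun j _ => ?_
    simp only [hg]
    by_cases h : (j:ℕ) < Nh
    · rw [dif_pos ⟨h, j.2⟩, Finset.mul_sum]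
      refine Finset.sum_congr rfl fun k _ => ?_
      rw [entry k j, dif_pos h]; ring
    · rw [dif_neg (fun hc => h hc.1)]
      apply Finset.sum_eq_zero; intro k _
      rw [entry k j, dif_neg h]; ring
  have hR : ∑ i : Fin Nh, (if (i:ℕ) < Ns then σ (i:ℕ) ^ 2 else 0) * ∑ k, (Q i k)^2
      = ∑ t ∈ Finset.range Nh, g t := by
    rw [← Fin.sum_univ_eq_sum_range]
    refine Finset.sum_congr rfl fun i _ => ?_
    simp only [hg]
    by_cases h : (i:ℕ) < Ns
    · rw [if_pos h, dif_pos ⟨i.2, h⟩]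
    · rw [if_neg h, dif_neg (fun hc => h hc.2), zero_mul]
  rw [hL, hR]
  exact pod_sum_range_eq_of g Ns Nh (fun t ht => hgz t (by simp at ht ⊢; omega))

end PODaux

/-- Optimality of the POD basis in the `X_h`-weighted norm: the matrix `V` built from
the first `n` left singular vectors of `H * S` (transformed by `H⁻¹`) achieves the minimum
reconstruction error over all matrices `W` with `X_h`-orthonormal columns. -/
theorem pod_optimality
    (Nh Ns n : ℕ) (hn1 : 1 ≤ n) (hn : n ≤ min Nh Ns)
    (Xh H : Matrix (Fin Nh) (Fin Nh) ℝ)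
    (hXsymm : Xh.IsSymm) (hXpd : Xh.PosDef)
    (hH : IsUnit H.det) (hXhfact : Xh = Hᵀ * H)
    (S : Matrix (Fin Nh) (Fin Ns) ℝ)
    (U : Matrix (Fin Nh) (Fin Nh) ℝ) (Z : Matrix (Fin Ns) (Fin Ns) ℝ)
    (σ : ℕ → ℝ) (Sig : Matrix (Fin Nh) (Fin Ns) ℝ)
    (hU : Uᵀ * U = 1) (hZ : Zᵀ * Z = 1)
    (hSig : ∀ (i : Fin Nh) (j : Fin Ns),
      Sig i j = if (i : ℕ) = (j : ℕ) then σ (i : ℕ) else 0)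
    (hσnonneg : ∀ j, j < min Nh Ns → 0 ≤ σ j)
    (hσdecr : ∀ i j, i ≤ j → j < min Nh Ns → σ j ≤ σ i)
    (hSVD : H * S = U * Sig * Zᵀ)
    (V : Matrix (Fin Nh) (Fin n) ℝ)
    (hV : ∀ (i : Fin Nh) (k : Fin n),
      V i k = (H⁻¹ * U) i ⟨(k : ℕ), lt_of_lt_of_le k.2 (le_trans hn (min_le_left Nh Ns))⟩) :
    IsLeast
      { e : ℝ | ∃ W : Matrix (Fin Nh) (Fin n) ℝ, Wᵀ * Xh * W = 1 ∧
          e = ∑ k : Fin Ns,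
            ((fun i => S i k) - (W * Wᵀ * Xh) *ᵥ (fun i => S i k)) ⬝ᵥ
              (Xh *ᵥ ((fun i => S i k) - (W * Wᵀ * Xh) *ᵥ (fun i => S i k))) }
      (∑ k : Fin Ns,
        ((fun i => S i k) - (V * Vᵀ * Xh) *ᵥ (fun i => S i k)) ⬝ᵥ
          (Xh *ᵥ ((fun i => S i k) - (V * Vᵀ * Xh) *ᵥ (fun i => S i k)))) := by
  have hnNh : n ≤ Nh := le_trans hn (min_le_left Nh Ns)
  have hnNs : n ≤ Ns := le_trans hn (min_le_right Nh Ns)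
  have hUUT : U * Uᵀ = 1 := mul_eq_one_comm.mp hU
  set Y : Matrix (Fin Nh) (Fin Ns) ℝ := H * S with hY
  set c : Fin Nh → ℝ := fun i => if (i:ℕ) < Ns then σ (i:ℕ) ^ 2 else 0 with hc
  set ind : Fin Nh → ℝ := fun i => if (i:ℕ) < n then (1:ℝ) else 0 with hind
  -- the error functional, rewritten
  have master : ∀ W : Matrix (Fin Nh) (Fin n) ℝ, Wᵀ * Xh * W = 1 →
      (Uᵀ * (H * W))ᵀ * (Uᵀ * (H * W)) = 1 ∧
      (∑ k : Fin Ns,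
        ((fun i => S i k) - (W * Wᵀ * Xh) *ᵥ (fun i => S i k)) ⬝ᵥ
          (Xh *ᵥ ((fun i => S i k) - (W * Wᵀ * Xh) *ᵥ (fun i => S i k))))
        = trace (Yᵀ * Y) - ∑ i : Fin Nh, c i * ∑ k, ((Uᵀ * (H * W)) i k)^2 := by
    intro W hW
    set T : Matrix (Fin Nh) (Fin n) ℝ := H * W with hT
    have hTT : Tᵀ * T = 1 := by
      rw [hT, transpose_mul, Matrix.mul_assoc, ← Matrix.mul_assoc Hᵀ, ← hXhfact,
        ← Matrix.mul_assoc, hW]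
    set Q : Matrix (Fin Nh) (Fin n) ℝ := Uᵀ * T with hQdef
    have hQ : Qᵀ * Q = 1 := by
      rw [hQdef, transpose_mul, transpose_transpose, Matrix.mul_assoc,
        ← Matrix.mul_assoc U, hUUT, Matrix.one_mul, hTT]
    refine ⟨hQ, ?_⟩
    -- step 1: columns to matrix
    have hcol : ∀ k : Fin Ns,
        ((fun i => S i k) - (W * Wᵀ * Xh) *ᵥ (fun i => S i k))
          = (fun i => (S - W * Wᵀ * Xh * S) i k) := by
      intro k; funext i
      simp [mulVec, dotProduct, Matrix.mul_apply, Matrix.sub_apply]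
    have step1 : (∑ k : Fin Ns,
        ((fun i => S i k) - (W * Wᵀ * Xh) *ᵥ (fun i => S i k)) ⬝ᵥ
          (Xh *ᵥ ((fun i => S i k) - (W * Wᵀ * Xh) *ᵥ (fun i => S i k))))
        = trace ((S - W * Wᵀ * Xh * S)ᵀ * Xh * (S - W * Wᵀ * Xh * S)) := by
      rw [← pod_sum_col_dot]
      exact Finset.sum_congr rfl fun k _ => by rw [hcol k]
    -- step 2: pull in H
    have step2 : (S - W * Wᵀ * Xh * S)ᵀ * Xh * (S - W * Wᵀ * Xh * S)
        = (Y - T * Tᵀ * Y)ᵀ * (Y - T * Tᵀ * Y) := by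
      have hHA : H * (S - W * Wᵀ * Xh * S) = Y - T * Tᵀ * Y := by
        rw [Matrix.mul_sub, hY, hT, hXhfact]
        congr 1
        simp only [transpose_mul, Matrix.mul_assoc]
      calc (S - W * Wᵀ * Xh * S)ᵀ * Xh * (S - W * Wᵀ * Xh * S)
          = (H * (S - W * Wᵀ * Xh * S))ᵀ * (H * (S - W * Wᵀ * Xh * S)) := by
            rw [hXhfact, transpose_mul]
            simp only [Matrix.mul_assoc]
        _ = (Y - T * Tᵀ * Y)ᵀ * (Y - T * Tᵀ * Y) := by rw [hHA]
    -- step 3: err_eq and SVD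
    have step3 : trace ((Tᵀ * Y)ᵀ * (Tᵀ * Y)) = ∑ i : Fin Nh, c i * ∑ k, (Q i k)^2 := by
      have hTY : Tᵀ * Y = (Qᵀ * Sig) * Zᵀ := by
        rw [hSVD, hQdef, transpose_mul Uᵀ T, transpose_transpose]
        simp only [Matrix.mul_assoc]
      rw [hTY, pod_trace_ZT _ Z hZ, pod_frob, pod_collapse Nh Ns σ Sig hSig Q]
    rw [step1, step2, pod_err_eq Y T hTT, step3]
  -- indicator sum
  have hindsum : ∑ i : Fin Nh, ind i = (n : ℝ) := by
    rw [hind, Fin.sum_univ_eq_sum_range (fun t => if t < n then (1:ℝ) else 0)]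
    rw [← Finset.sum_subset (Finset.range_subset_range.2 hnNh)
      (fun t _ ht => if_neg (by simpa using ht))]
    rw [Finset.sum_congr rfl (fun t ht => if_pos (Finset.mem_range.1 ht))]
    simp
  -- V is feasible
  have hHV : H * V = U * (Matrix.of fun (i : Fin Nh) (k : Fin n) =>
      if (i:ℕ) = (k:ℕ) then (1:ℝ) else 0) := by
    ext i k
    have hkNh : (k:ℕ) < Nh := lt_of_lt_of_le k.2 hnNh
    have hHinv : H * (H⁻¹ * U) = U := by
      rw [← Matrix.mul_assoc, Matrix.mul_nonsing_inv _ hH, Matrix.one_mul]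
    have lhs : (H * V) i k = (H * (H⁻¹ * U)) i ⟨(k:ℕ), hkNh⟩ := by
      rw [Matrix.mul_apply, Matrix.mul_apply]
      exact Finset.sum_congr rfl fun j _ => by rw [hV]
    rw [lhs, hHinv, Matrix.mul_apply]
    rw [Finset.sum_eq_single ⟨(k:ℕ), hkNh⟩]
    · simp
    · intro j _ hj
      have : (j:ℕ) ≠ (k:ℕ) := fun he => hj (Fin.ext he)
      simp [this]
    · simp
  set Eb : Matrix (Fin Nh) (Fin n) ℝ :=
    Matrix.of fun (i : Fin Nh) (k : Fin n) => if (i:ℕ) = (k:ℕ) then (1:ℝ) else 0 with hEb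
  have hEbE : Ebᵀ * Eb = 1 := by
    ext k k'
    rw [Matrix.mul_apply]
    rw [Finset.sum_eq_single ⟨(k:ℕ), lt_of_lt_of_le k.2 hnNh⟩]
    · by_cases h : k = k'
      · subst h; simp [hEb]
      · have : (k:ℕ) ≠ (k':ℕ) := fun he => h (Fin.ext he)
        simp [hEb, this, Matrix.one_apply, h]
    · intro i _ hi
      have : (i:ℕ) ≠ (k:ℕ) := fun he => hi (Fin.ext he)
      simp [hEb, this]
    · simp
  have hVfeas : Vᵀ * Xh * V = 1 := by
    have e : Vᵀ * Xh * V = (H * V)ᵀ * (H * V) := by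
      rw [hXhfact, transpose_mul]
      simp only [Matrix.mul_assoc]
    rw [e, hHV, transpose_mul, Matrix.mul_assoc, ← Matrix.mul_assoc Uᵀ, hU,
      Matrix.one_mul, hEbE]
  obtain ⟨hQV1, hval⟩ := master V hVfeas
  have hQV : Uᵀ * (H * V) = Eb := by
    rw [hHV, ← Matrix.mul_assoc, hU, Matrix.one_mul]
  have hrV : ∀ i : Fin Nh, (∑ k, ((Uᵀ * (H * V)) i k)^2) = ind i := by
    intro i
    rw [hQV]
    simp only [hind]
    by_cases h : (i:ℕ) < n
    · rw [if_pos h]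
      rw [Finset.sum_eq_single ⟨(i:ℕ), h⟩]
      · simp [hEb]
      · intro k _ hk
        have : (i:ℕ) ≠ (k:ℕ) := fun he => hk (Fin.ext he.symm)
        simp [hEb, this]
      · simp
    · rw [if_neg h]
      apply Finset.sum_eq_zero
      intro k _
      have : (i:ℕ) ≠ (k:ℕ) := fun he => h (he ▸ k.2)
      simp [hEb, this]
  have hvalV : (∑ k : Fin Ns,
      ((fun i => S i k) - (V * Vᵀ * Xh) *ᵥ (fun i => S i k)) ⬝ᵥ
        (Xh *ᵥ ((fun i => S i k) - (V * Vᵀ * Xh) *ᵥ (fun i => S i k))))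
      = trace (Yᵀ * Y) - ∑ i : Fin Nh, c i * ind i := by
    have e : ∑ i : Fin Nh, c i * ∑ k, ((Uᵀ * (H * V)) i k)^2 = ∑ i : Fin Nh, c i * ind i :=
      Finset.sum_congr rfl fun i _ => by rw [hrV i]
    rw [hval, e]
  constructor
  · exact ⟨V, hVfeas, hvalV ▸ rfl⟩
  · rintro e ⟨W, hW, rfl⟩
    obtain ⟨hQ1, hvalW⟩ := master W hW
    rw [hvalW, hvalV]
    have hQ := hQ1
    set Q := Uᵀ * (H * W) with hQdef
    have habel : ∑ i : Fin Nh, c i * ∑ k, (Q i k)^2 ≤ ∑ i : Fin Nh, c i * ind i := by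
      have hn1' : n - 1 < min Nh Ns := by omega
      apply pod_abel_bound c _ (σ (n-1) ^ 2) ind
      · intro i; simp only [hind]; by_cases h : (i:ℕ) < n
        · right; rw [if_pos h]
        · left; rw [if_neg h]
      · intro i; exact (pod_row_sq_le_one Q hQ i).1
      · intro i; exact (pod_row_sq_le_one Q hQ i).2
      · rw [hindsum, pod_sum_row_sq Q hQ]; simp
      · intro i hi
        have hin : (i:ℕ) < n := by
          by_contra h; simp only [hind] at hi; simp [h] at hi
        have hiNs : (i:ℕ) < Ns := lt_of_lt_of_le hin hnNs
        simp only [hc, if_pos hiNs]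
        have h1 : σ (n-1) ≤ σ (i:ℕ) := hσdecr (i:ℕ) (n-1) (by omega) hn1'
        have h2 : 0 ≤ σ (n-1) := hσnonneg (n-1) hn1'
        exact pow_le_pow_left₀ h2 h1 2
      · intro i hi
        have hin : ¬ (i:ℕ) < n := by
          by_contra h; simp only [hind] at hi; simp [h] at hi
        simp only [hc]
        by_cases hiNs : (i:ℕ) < Ns
        · simp only [if_pos hiNs]
          have himin : (i:ℕ) < min Nh Ns := lt_min i.2 hiNs
          have h1 : σ (i:ℕ) ≤ σ (n-1) := hσdecr (n-1) (i:ℕ) (by omega) himin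
          have h2 : 0 ≤ σ (i:ℕ) := hσnonneg (i:ℕ) himin
          exact pow_le_pow_left₀ h2 h1 2
        · simp only [if_neg hiNs]
          exact sq_nonneg _
    exact sub_le_sub_left habel _
end

section
/- Let $N_h, N_s, n \in \mathbb{N}$ with $1 \le n \le \min(N_h, N_s)$, let $X_h = H^T H$ be symmetric positive definite with $H$ invertible, let $S \in \mathbb{R}^{N_h \times N_s}$ have columns $\mathbf{s}_1,\dots,\mathbf{s}_{N_s}$, and let $HS = U \Sigma Z^T$ be a singular value decomposition with singular values $\sigma_1 \ge \sigma_2 \ge \dots \ge \sigma_r \ge 0$, $r = \min(N_h, N_s)$. Let $V = [H^{-1}\boldsymbol{\zeta}_1 \,|\, \dots \,|\, H^{-1}\boldsymbol{\zeta}_n]$, where $\boldsymbol{\zeta}_1,\dots,\boldsymbol{\zeta}_n$ are the first $n$ columns of $U$. Then the total squared reconstruction error of the optimal-POD reconstruction equals the sum of the squares of the discarded singular values: $\sum_{k=1}^{N_s} \| \mathbf{s}_k - V V^T X_h \mathbf{s}_k \|_{X_h}^2 = \sum_{j=n+1}^{r} \sigma_j^2$. -/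
open Matrix BigOperators

/-- The total squared `X_h`-norm reconstruction error of the optimal-POD reconstruction
with `n` modes equals the sum of the squares of the discarded singular values
`σ_{n+1}, …, σ_r` of `H * S`, where `r = min(N_h, N_s)`. -/
theorem pod_error_identity
    (Nh Ns n : ℕ) (hn1 : 1 ≤ n) (hn : n ≤ min Nh Ns)
    (Xh H : Matrix (Fin Nh) (Fin Nh) ℝ)
    (hXsymm : Xh.IsSymm) (hXpd : Xh.PosDef)
    (hH : IsUnit H.det) (hXhfact : Xh = Hᵀ * H)
    (S : Matrix (Fin Nh) (Fin Ns) ℝ)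
    (U : Matrix (Fin Nh) (Fin Nh) ℝ) (Z : Matrix (Fin Ns) (Fin Ns) ℝ)
    (σ : ℕ → ℝ) (Sig : Matrix (Fin Nh) (Fin Ns) ℝ)
    (hU : Uᵀ * U = 1) (hZ : Zᵀ * Z = 1)
    (hSig : ∀ (i : Fin Nh) (j : Fin Ns),
      Sig i j = if (i : ℕ) = (j : ℕ) then σ (i : ℕ) else 0)
    (hσnonneg : ∀ j, j < min Nh Ns → 0 ≤ σ j)
    (hσdecr : ∀ i j, i ≤ j → j < min Nh Ns → σ j ≤ σ i)
    (hSVD : H * S = U * Sig * Zᵀ)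
    (V : Matrix (Fin Nh) (Fin n) ℝ)
    (hV : ∀ (i : Fin Nh) (k : Fin n),
      V i k = (H⁻¹ * U) i ⟨(k : ℕ), lt_of_lt_of_le k.2 (le_trans hn (min_le_left Nh Ns))⟩) :
    ∑ k : Fin Ns,
        ((fun i => S i k) - (V * Vᵀ * Xh) *ᵥ (fun i => S i k)) ⬝ᵥ
          (Xh *ᵥ ((fun i => S i k) - (V * Vᵀ * Xh) *ᵥ (fun i => S i k))) =
      ∑ j ∈ Finset.Ico n (min Nh Ns), σ j ^ 2 := by
  have hr : n ≤ Nh := le_trans hn (min_le_left Nh Ns)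
  set En : Matrix (Fin Nh) (Fin n) ℝ :=
    Matrix.of (fun i k => if (i : ℕ) = (k : ℕ) then 1 else 0) with hEndef
  set P : Matrix (Fin Nh) (Fin Nh) ℝ :=
    Matrix.of (fun i j => if i = j ∧ (i : ℕ) < n then 1 else 0) with hPdef
  have hmulEn : ∀ A : Matrix (Fin Nh) (Fin Nh) ℝ, ∀ (i : Fin Nh) (k : Fin n),
      (A * En) i k = A i ⟨(k : ℕ), lt_of_lt_of_le k.2 hr⟩ := by
    intro A i k
    rw [Matrix.mul_apply]
    rw [Finset.sum_eq_single (⟨(k : ℕ), lt_of_lt_of_le k.2 hr⟩ : Fin Nh)]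
    · simp [hEndef]
    · intro b _ hb
      have hbk : (b : ℕ) ≠ (k : ℕ) := by
        intro h; exact hb (Fin.ext h)
      simp [hEndef, hbk]
    · simp
  have hVEn : V = H⁻¹ * U * En := by
    ext i k
    rw [hV, hmulEn]
  have hEnEnT : En * Enᵀ = P := by
    ext i j
    simp only [Matrix.mul_apply, Matrix.transpose_apply, hEndef, hPdef, Matrix.of_apply]
    by_cases hij : i = j
    · subst hij
      by_cases hi : (i : ℕ) < n
      · rw [Finset.sum_eq_single (⟨(i : ℕ), hi⟩ : Fin n)]
        · simp [hi]
        · intro b _ hb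
          have : (i : ℕ) ≠ (b : ℕ) := by
            intro h; exact hb (Fin.ext h.symm)
          simp [this]
        · simp
      · rw [Finset.sum_eq_zero]
        · simp [hi]
        · intro b _
          have : (i : ℕ) ≠ (b : ℕ) := by
            have := b.2; omega
          simp [this]
    · rw [Finset.sum_eq_zero]
      · simp [hij]
      · intro b _
        by_cases h1 : (i : ℕ) = (b : ℕ)
        · have h2 : (j : ℕ) ≠ (b : ℕ) := by
            intro h; exact hij (Fin.ext (h1.trans h.symm))
          simp [h2]
        · simp [h1]
  have hPT : Pᵀ = P := by
    ext i j
    simp only [Matrix.transpose_apply, hPdef, Matrix.of_apply]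
    by_cases hij : i = j
    · subst hij; rfl
    · simp [hij, Ne.symm hij]
  have hPP : P * P = P := by
    ext i j
    simp only [Matrix.mul_apply, hPdef, Matrix.of_apply]
    rw [Finset.sum_eq_single i]
    · by_cases hi : (i : ℕ) < n
      · simp [hi]
      · simp [hi]
    · intro b _ hb
      simp [Ne.symm hb]
    · simp
  have hQQ : (1 - P) * (1 - P) = 1 - P := by
    rw [Matrix.sub_mul, Matrix.mul_sub, Matrix.mul_sub, hPP]
    simp
  have hQT : (1 - P)ᵀ = 1 - P := by
    rw [Matrix.transpose_sub, Matrix.transpose_one, hPT]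
  have hHHi : H * H⁻¹ = 1 := Matrix.mul_nonsing_inv H hH
  have h1 : (H⁻¹)ᵀ * (Hᵀ * H) = H := by
    rw [← Matrix.mul_assoc, ← Matrix.transpose_mul, hHHi, Matrix.transpose_one, Matrix.one_mul]
  have hVVX : V * Vᵀ * Xh = H⁻¹ * U * P * Uᵀ * H := by
    rw [hVEn, hXhfact, ← hEnEnT]
    simp only [Matrix.transpose_mul, Matrix.mul_assoc]
    rw [h1]
  have hUPU : ∀ Q : Matrix (Fin Nh) (Fin Nh) ℝ,
      U * Q * Uᵀ * (U * Sig * Zᵀ) = U * Q * Sig * Zᵀ := by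
    intro Q
    calc U * Q * Uᵀ * (U * Sig * Zᵀ) = U * Q * (Uᵀ * U) * Sig * Zᵀ := by
          simp only [Matrix.mul_assoc]
      _ = U * Q * Sig * Zᵀ := by rw [hU, Matrix.mul_one]
  have hKey : H * (S - V * Vᵀ * Xh * S) = U * (1 - P) * Sig * Zᵀ := by
    rw [Matrix.mul_sub, hVVX, hSVD]
    have h2 : H * (H⁻¹ * U * P * Uᵀ * H * S) = U * P * Sig * Zᵀ := by
      calc H * (H⁻¹ * U * P * Uᵀ * H * S)
          = (H * H⁻¹) * (U * P * Uᵀ * (H * S)) := by simp only [Matrix.mul_assoc]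
        _ = U * P * Uᵀ * (U * Sig * Zᵀ) := by
            rw [hHHi, Matrix.one_mul, hSVD]
        _ = U * P * Sig * Zᵀ := hUPU P
    rw [h2, Matrix.mul_sub, Matrix.mul_one, Matrix.sub_mul, Matrix.sub_mul]
  set M : Matrix (Fin Nh) (Fin Ns) ℝ := U * (1 - P) * Sig * Zᵀ with hMdef
  set E : Matrix (Fin Nh) (Fin Ns) ℝ := S - V * Vᵀ * Xh * S with hEdef
  have hcol : ∀ k : Fin Ns,
      ((fun i => S i k) - (V * Vᵀ * Xh) *ᵥ (fun i => S i k)) = (fun i => E i k) := by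
    intro k; funext i
    simp [hEdef, Matrix.mulVec, Matrix.mul_apply, dotProduct, Matrix.sub_apply]
  have hHcol : ∀ (k : Fin Ns), H *ᵥ (fun i => E i k) = fun i => M i k := by
    intro k; funext i
    have : (H * E) i k = M i k := by rw [hKey]
    rw [← this]
    simp [Matrix.mulVec, Matrix.mul_apply, dotProduct]
  have hLHS : ∑ k : Fin Ns,
        ((fun i => S i k) - (V * Vᵀ * Xh) *ᵥ (fun i => S i k)) ⬝ᵥ
          (Xh *ᵥ ((fun i => S i k) - (V * Vᵀ * Xh) *ᵥ (fun i => S i k))) =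
      ∑ k : Fin Ns, ∑ i : Fin Nh, M i k * M i k := by
    refine Finset.sum_congr rfl fun k _ => ?_
    rw [hcol k, hXhfact, ← Matrix.mulVec_mulVec, Matrix.dotProduct_mulVec,
      Matrix.vecMul_transpose, hHcol k]
    simp [dotProduct]
  rw [hLHS]
  have hMsum : ∑ k : Fin Ns, ∑ i : Fin Nh, M i k * M i k = Matrix.trace (Mᵀ * M) := by
    simp [Matrix.trace, Matrix.diag, Matrix.mul_apply, mul_comm]
  rw [hMsum]
  have hMTM : Mᵀ * M = Z * (Sigᵀ * ((1 - P) * Sig)) * Zᵀ := by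
    rw [hMdef]
    simp only [Matrix.transpose_mul, hQT, Matrix.transpose_transpose]
    calc Zᵀᵀ * (Sigᵀ * ((1 - P) * Uᵀ)) * (U * (1 - P) * Sig * Zᵀ)
        = Z * (Sigᵀ * ((1 - P) * ((Uᵀ * U) * ((1 - P) * (Sig * Zᵀ))))) := by
          rw [Matrix.transpose_transpose]; simp only [Matrix.mul_assoc]
      _ = Z * (Sigᵀ * (((1 - P) * (1 - P)) * (Sig * Zᵀ))) := by
          rw [hU, Matrix.one_mul]; simp only [Matrix.mul_assoc]
      _ = Z * (Sigᵀ * ((1 - P) * Sig)) * Zᵀ := by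
          rw [hQQ]; simp only [Matrix.mul_assoc]
  rw [hMTM]
  have htrZ : Matrix.trace (Z * (Sigᵀ * ((1 - P) * Sig)) * Zᵀ) =
      Matrix.trace (Sigᵀ * ((1 - P) * Sig)) := by
    rw [Matrix.trace_mul_comm, ← Matrix.mul_assoc, hZ, Matrix.one_mul]
  rw [htrZ]
  have hQSig : (1 - P) * Sig =
      Matrix.of (fun (i : Fin Nh) (j : Fin Ns) =>
        if (i : ℕ) = (j : ℕ) ∧ n ≤ (i : ℕ) then σ (i : ℕ) else 0) := by
    ext i j
    simp only [Matrix.mul_apply, Matrix.sub_apply, Matrix.one_apply, hPdef, Matrix.of_apply, hSig]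
    rw [Finset.sum_eq_single i]
    · by_cases hi : (i : ℕ) < n
      · have : ¬ n ≤ (i : ℕ) := by omega
        simp [hi, this]
      · by_cases hij : (i : ℕ) = (j : ℕ)
        · have h3 : ¬ ((j : ℕ) < n) := by omega
          have h4 : n ≤ (j : ℕ) := by omega
          simp [hi, hij, h3, h4]
        · simp [hi, hij]
    · intro b _ hb
      simp [Ne.symm hb]
    · simp
  rw [hQSig]
  have htr2 : Matrix.trace (Sigᵀ *
      Matrix.of (fun (i : Fin Nh) (j : Fin Ns) =>
        if (i : ℕ) = (j : ℕ) ∧ n ≤ (i : ℕ) then σ (i : ℕ) else 0)) =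
      ∑ j : Fin Ns, if (j : ℕ) < Nh ∧ n ≤ (j : ℕ) then σ (j : ℕ) ^ 2 else 0 := by
    simp only [Matrix.trace, Matrix.diag, Matrix.mul_apply, Matrix.transpose_apply,
      Matrix.of_apply, hSig]
    refine Finset.sum_congr rfl fun j _ => ?_
    by_cases hj : (j : ℕ) < Nh
    · rw [Finset.sum_eq_single (⟨(j : ℕ), hj⟩ : Fin Nh)]
      · by_cases hnj : n ≤ (j : ℕ) <;> simp [hnj, hj, sq]
      · intro b _ hb
        have : (b : ℕ) ≠ (j : ℕ) := by
          intro h; exact hb (Fin.ext h)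
        simp [this]
      · simp
    · rw [Finset.sum_eq_zero]
      · simp [hj]
      · intro b _
        have : (b : ℕ) ≠ (j : ℕ) := by have := b.2; omega
        simp [this]
  rw [htr2]
  rw [Fin.sum_univ_eq_sum_range (fun j => if j < Nh ∧ n ≤ j then σ j ^ 2 else 0) Ns]
  rw [← Finset.sum_filter]
  apply Finset.sum_congr
  · ext j
    simp only [Finset.mem_filter, Finset.mem_range, Finset.mem_Ico]
    omega
  · intros; rfl
end
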